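/- Let A be a unital C*-algebra and a ∈ A with im(a) ≤ -δ·1 for some δ > 0. Then a is invertible and im(a⁻¹) ≥ (δ/‖a‖²)·1. -/

import Mathlib

/-- The "imaginary part" `(a - a*)/(2i)` of an element of a complex star algebra. -/
noncomputable def imPart {A : Type*} [NormedRing A] [NormedAlgebra ℂ A] [StarRing A] (a : A) : A :=
  (2 * Complex.I)⁻¹ • (a - star a)

open scoped NNReal

section aux
variable {A : Type*} [CStarAlgebra A] [PartialOrder A] [StarOrderedRing A]

lemma aux_smul_nonneg {t : ℝ} (ht : 0 ≤ t) {z : A} (hz : 0 ≤ z) :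
    0 ≤ ((t : ℝ) : ℂ) • z := by
  have h1 : CFC.sqrt z * CFC.sqrt z = z := CFC.sqrt_mul_sqrt_self z hz
  have h2 : star (CFC.sqrt z) = CFC.sqrt z :=
    (IsSelfAdjoint.of_nonneg (CFC.sqrt_nonneg z)).star_eq
  have key : ((t : ℝ) : ℂ) • z =
      star (((Real.sqrt t : ℝ) : ℂ) • CFC.sqrt z) * (((Real.sqrt t : ℝ) : ℂ) • CFC.sqrt z) := by
    rw [star_smul, h2, smul_mul_smul_comm, h1]
    congr 1
    rw [RCLike.star_def, Complex.conj_ofReal, ← Complex.ofReal_mul, Real.mul_self_sqrt ht]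
  rw [key]
  exact star_mul_self_nonneg _

lemma aux_smul_le_smul {t : ℝ} (ht : 0 ≤ t) {x y : A} (hxy : x ≤ y) :
    ((t : ℝ) : ℂ) • x ≤ ((t : ℝ) : ℂ) • y := by
  have := aux_smul_nonneg ht (sub_nonneg.2 hxy)
  rw [smul_sub, sub_nonneg] at this
  exact this

lemma aux_main (a : A) (δ : ℝ) (hδ : 0 < δ)
    (h : imPart a ≤ ((-δ : ℝ) : ℂ) • (1 : A)) :
    ∃ w : A, a * w = 1 ∧ w * a = 1 ∧
      (((δ / ‖a‖ ^ 2 : ℝ)) : ℂ) • (1 : A) ≤ imPart w := by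
  rcases subsingleton_or_nontrivial A with hA | hA
  · exact ⟨0, Subsingleton.elim _ _, Subsingleton.elim _ _, le_of_eq (Subsingleton.elim _ _)⟩
  set p : A := -(imPart a) with hp_def
  have hδp : ((δ : ℝ) : ℂ) • (1 : A) ≤ p := by
    have := neg_le_neg h
    rwa [show -(((-δ : ℝ) : ℂ) • (1 : A)) = ((δ : ℝ) : ℂ) • (1 : A) by
      push_cast; rw [← neg_smul]; ring_nf] at this
  have him : IsSelfAdjoint (imPart a) := by
    rw [imPart, IsSelfAdjoint, star_smul, star_sub, star_star, RCLike.star_def, map_inv₀,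
      map_mul, Complex.conj_I]
    rw [Complex.conj_ofNat, ← neg_sub a (star a), smul_neg,
      show ((2:ℂ) * -Complex.I)⁻¹ = -(2 * Complex.I)⁻¹ by rw [mul_neg, inv_neg], neg_smul,
      neg_neg]
  have hpsa : IsSelfAdjoint p := him.neg
  have hδ1_nonneg : (0 : A) ≤ ((δ : ℝ) : ℂ) • 1 := aux_smul_nonneg hδ.le zero_le_one
  have hδ1_unit : IsUnit (((δ : ℝ) : ℂ) • (1 : A)) := by
    refine ⟨⟨((δ : ℝ) : ℂ) • 1, (((δ⁻¹ : ℝ)) : ℂ) • 1, ?_, ?_⟩, rfl⟩ <;>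
    · rw [smul_mul_smul_comm, mul_one, ← Complex.ofReal_mul]
      norm_num [mul_inv_cancel₀ hδ.ne', inv_mul_cancel₀ hδ.ne']
  have hpu : IsUnit p := CStarAlgebra.isUnit_of_le _ hδp ⟨hδ1_nonneg, hδ1_unit⟩
  have hp : (0 : A) ≤ p := hδ1_nonneg.trans hδp
  have h0 : 0 ∉ spectrum ℝ≥0 p := spectrum.zero_notMem ℝ≥0 hpu
  set q : A := p ^ ((1:ℝ)/2) with hq_def
  set r : A := p ^ (-((1:ℝ)/2)) with hr_def
  have hqr : q * r = 1 := CFC.rpow_mul_rpow_neg ((1:ℝ)/2) ⟨hp, hpu⟩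
  have hrq : r * q = 1 := CFC.rpow_neg_mul_rpow ((1:ℝ)/2) ⟨hp, hpu⟩
  have hqq : q * q = p := by
    rw [hq_def, ← CFC.rpow_add hpu]
    norm_num
    exact CFC.rpow_one p hp
  set c : A := (2:ℂ)⁻¹ • (a + star a) with hc_def
  have hcsa : IsSelfAdjoint c := by
    rw [hc_def, IsSelfAdjoint, star_smul, star_add, star_star, RCLike.star_def, map_inv₀,
      Complex.conj_ofNat, add_comm]
  have hrsa : IsSelfAdjoint r := IsSelfAdjoint.of_nonneg CFC.rpow_nonneg
  set s : A := r * c * r with hs_def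
  have hssa : IsSelfAdjoint s := by
    rw [hs_def, IsSelfAdjoint, star_mul, star_mul, hrsa.star_eq, hcsa.star_eq, mul_assoc]
  set u : A := s - Complex.I • 1 with hu_def
  have hustar : star u = s + Complex.I • 1 := by
    rw [hu_def, star_sub, star_smul, star_one, hssa.star_eq, RCLike.star_def, Complex.conj_I,
      neg_smul, sub_neg_eq_add]
  have hss_nonneg : (0 : A) ≤ s * s := by simpa [hssa.star_eq] using star_mul_self_nonneg s
  have huu : u * star u = s * s + 1 := by
    rw [hustar, hu_def]
    simp only [mul_add, add_mul, sub_mul, mul_sub, mul_smul_comm, smul_mul_assoc, smul_smul,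
      smul_add, smul_sub, mul_one, one_mul, Complex.I_mul_I, neg_smul, one_smul]
    module
  have huu' : star u * u = s * s + 1 := by
    rw [hustar, hu_def]
    simp only [mul_add, add_mul, sub_mul, mul_sub, mul_smul_comm, smul_mul_assoc, smul_smul,
      smul_add, smul_sub, mul_one, one_mul, Complex.I_mul_I, neg_smul, one_smul]
    module
  obtain ⟨V, hV_eq⟩ : IsUnit (s * s + 1) :=
    CStarAlgebra.isUnit_of_le 1 (le_add_of_nonneg_left hss_nonneg) ⟨zero_le_one, isUnit_one⟩
  have hux : u * (star u * ↑V⁻¹) = 1 := by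
    rw [← mul_assoc, huu, ← hV_eq, V.mul_inv]
  have hyu : ((↑V⁻¹ : A) * star u) * u = 1 := by
    rw [mul_assoc, huu', ← hV_eq, V.inv_mul]
  have hxy : star u * ↑V⁻¹ = (↑V⁻¹ : A) * star u := by
    calc star u * ↑V⁻¹ = (((↑V⁻¹ : A) * star u) * u) * (star u * ↑V⁻¹) := by rw [hyu, one_mul]
    _ = ((↑V⁻¹ : A) * star u) * (u * (star u * ↑V⁻¹)) := by simp [mul_assoc]
    _ = (↑V⁻¹ : A) * star u := by rw [hux, mul_one]
  have huunit : IsUnit u := ⟨⟨u, star u * ↑V⁻¹, hux, by rw [hxy]; exact hyu⟩, rfl⟩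
  have hqunit : IsUnit q := ⟨⟨q, r, hqr, hrq⟩, rfl⟩
  have ha_eq : a = q * u * q := by
    have h1 : q * s * q = c := by
      rw [hs_def]
      have h2 : q * (r * c * r) * q = (q * r) * c * (r * q) := by simp [mul_assoc]
      rw [h2, hqr, hrq, one_mul, mul_one]
    have h2 : q * u * q = c - Complex.I • p := by
      have expand : q * (s - Complex.I • 1) * q = q * s * q - Complex.I • (q * q) := by
        rw [mul_sub, sub_mul, mul_smul_comm, smul_mul_assoc, mul_one]
      rw [hu_def, expand, hqq, h1]
    rw [h2, hc_def, hp_def, imPart, smul_neg, smul_smul,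
      show Complex.I * (2 * Complex.I)⁻¹ = (2:ℂ)⁻¹ by field_simp [mul_comm], sub_neg_eq_add]
    module
  have haunit : IsUnit a := ha_eq ▸ (hqunit.mul huunit).mul hqunit
  set w : A := ↑haunit.unit⁻¹ with hw_def
  have haw : a * w = 1 := haunit.mul_val_inv
  have hwa : w * a = 1 := haunit.val_inv_mul
  refine ⟨w, haw, hwa, ?_⟩
  have hwsa : star a * star w = 1 := by rw [← star_mul, hwa, star_one]
  have hwsa' : star w * star a = 1 := by rw [← star_mul, haw, star_one]
  have hp_eq : p = (2 * Complex.I)⁻¹ • (star a - a) := by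
    rw [hp_def, imPart, ← smul_neg, neg_sub]
  have him_w : imPart w = w * p * star w := by
    have key : w - star w = w * (star a - a) * star w := by
      rw [mul_sub, sub_mul, mul_assoc w (star a), hwsa, mul_one, hwa, one_mul]
    rw [imPart, key, hp_eq, mul_smul_comm, smul_mul_assoc]
  have step1 : ((δ : ℝ) : ℂ) • (w * star w) ≤ w * p * star w := by
    have hconj := star_left_conjugate_le_conjugate hδp (star w)
    rwa [star_star, mul_smul_comm, mul_one, smul_mul_assoc] at hconj
  have hna : ‖a‖ ≠ 0 := norm_ne_zero_iff.mpr haunit.ne_zero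
  have hSmul : (star a * a) * (w * star w) = 1 := by
    calc (star a * a) * (w * star w) = star a * ((a * w) * star w) := by simp [mul_assoc]
    _ = 1 := by rw [haw, one_mul, hwsa]
  have hSmul' : (w * star w) * (star a * a) = 1 := by
    calc (w * star w) * (star a * a) = w * ((star w * star a) * a) := by simp [mul_assoc]
    _ = 1 := by rw [hwsa', one_mul, hwa]
  have hconv : ∀ t : ℝ, algebraMap ℝ A t = ((t : ℝ) : ℂ) • (1 : A) := fun t => by
    rw [Algebra.algebraMap_eq_smul_one, ← algebraMap_smul ℂ t (1 : A), Complex.coe_algebraMap]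
  have step2 : ((((‖a‖ ^ 2)⁻¹ : ℝ)) : ℂ) • (1 : A) ≤ w * star w := by
    set S : Aˣ := ⟨star a * a, w * star w, hSmul, hSmul'⟩ with hS_def
    set T : Aˣ := ⟨algebraMap ℝ A (‖a‖ ^ 2), algebraMap ℝ A ((‖a‖ ^ 2)⁻¹),
      by rw [← map_mul, mul_inv_cancel₀ (pow_ne_zero 2 hna), map_one],
      by rw [← map_mul, inv_mul_cancel₀ (pow_ne_zero 2 hna), map_one]⟩ with hT_def
    have hST : (S : A) ≤ (T : A) := by
      have hle := IsSelfAdjoint.le_algebraMap_norm_self (IsSelfAdjoint.star_mul_self a)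
      rwa [CStarRing.norm_star_mul_self, ← pow_two] at hle
    have hinv : (↑T⁻¹ : A) ≤ (↑S⁻¹ : A) :=
      CStarAlgebra.inv_le_inv (a := S) (star_mul_self_nonneg a) hST
    rw [show (↑S⁻¹ : A) = w * star w from rfl, show (↑T⁻¹ : A) = algebraMap ℝ A ((‖a‖ ^ 2)⁻¹)
      from rfl, hconv] at hinv
    exact hinv
  have step3 : (((δ * (‖a‖ ^ 2)⁻¹ : ℝ)) : ℂ) • (1 : A) ≤ ((δ : ℝ) : ℂ) • (w * star w) := by
    have := aux_smul_le_smul hδ.le step2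
    rwa [smul_smul, ← Complex.ofReal_mul] at this
  calc (((δ / ‖a‖ ^ 2 : ℝ)) : ℂ) • (1 : A)
      = (((δ * (‖a‖ ^ 2)⁻¹ : ℝ)) : ℂ) • (1 : A) := by rw [div_eq_mul_inv]
    _ ≤ ((δ : ℝ) : ℂ) • (w * star w) := step3
    _ ≤ w * p * star w := step1
    _ = imPart w := him_w.symm

end aux

/-- If `im a ≤ -δ·1` with `δ > 0`, then `a` is invertible and
`im (a⁻¹) ≥ (δ/‖a‖²)·1`. -/
theorem stmt3 {A : Type*} [NormedRing A] [StarRing A] [CStarRing A]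
    [NormedAlgebra ℂ A] [CompleteSpace A] [StarModule ℂ A]
    [PartialOrder A] [StarOrderedRing A]
    (a : A) (δ : ℝ) (hδ : 0 < δ)
    (h : imPart a ≤ ((-δ : ℝ) : ℂ) • (1 : A)) :
    ∃ w : A, a * w = 1 ∧ w * a = 1 ∧
      (((δ / ‖a‖ ^ 2 : ℝ)) : ℂ) • (1 : A) ≤ imPart w := by
  letI : CStarAlgebra A := { }
  exact aux_main a δ hδ h
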